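/- Hölder estimate for the map N⁺ (Lemma 2.1(1), forward direction): with the Bartels–Lück distance d(ℓ,ℓ') = ∫_ℝ d(ℓ(t),ℓ'(t)) e^{-2|t|} dt on maps ℝ → X, one has d(N(ℓ),N(ℓ')) ≤ d(ℓ,ℓ') + (1/2)·d(ℓ(0),ℓ'(0)), where N(ℓ)(t) = ℓ(min(t,0)). -/
import Mathlib


open MeasureTheory Real

/-- Lemma 2.1(1), forward direction: with the Bartels–Lück distance
`d(f,g) = ∫ d(f(t),g(t)) e^{-2|t|} dt` and `N ℓ (t) = ℓ (min t 0)`, one has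
`d(N ℓ, N ℓ') ≤ d(ℓ,ℓ') + (1/2) d(ℓ(0),ℓ'(0))`. -/
theorem stmt_10 {X : Type*} [MetricSpace X] (ℓ ℓ' : ℝ → X)
    (hcont : Continuous ℓ) (hcont' : Continuous ℓ')
    (h1 : Integrable (fun t => dist (ℓ t) (ℓ' t) * Real.exp (-2 * |t|)))
    (h2 : Integrable (fun t => dist (ℓ (min t 0)) (ℓ' (min t 0)) * Real.exp (-2 * |t|))) :
    (∫ t, dist (ℓ (min t 0)) (ℓ' (min t 0)) * Real.exp (-2 * |t|)) ≤
      (∫ t, dist (ℓ t) (ℓ' t) * Real.exp (-2 * |t|)) + (1 / 2) * dist (ℓ 0) (ℓ' 0) := by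
  have hsplit := intervalIntegral.integral_Iic_add_Ioi (b := (0:ℝ)) h2.integrableOn h2.integrableOn
  rw [← hsplit]
  have hIic : (∫ t in Set.Iic (0:ℝ), dist (ℓ (min t 0)) (ℓ' (min t 0)) * Real.exp (-2 * |t|))
      = ∫ t in Set.Iic (0:ℝ), dist (ℓ t) (ℓ' t) * Real.exp (-2 * |t|) := by
    refine setIntegral_congr_fun measurableSet_Iic fun t ht => ?_
    simp only [Set.mem_Iic] at ht
    rw [min_eq_left ht]
  have hIoi : (∫ t in Set.Ioi (0:ℝ), dist (ℓ (min t 0)) (ℓ' (min t 0)) * Real.exp (-2 * |t|))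
      = (1 / 2) * dist (ℓ 0) (ℓ' 0) := by
    have : (∫ t in Set.Ioi (0:ℝ), dist (ℓ (min t 0)) (ℓ' (min t 0)) * Real.exp (-2 * |t|))
        = ∫ t in Set.Ioi (0:ℝ), dist (ℓ 0) (ℓ' 0) * Real.exp (-(2 * t)) := by
      refine setIntegral_congr_fun measurableSet_Ioi fun t ht => ?_
      simp only [Set.mem_Ioi] at ht
      rw [min_eq_right ht.le, abs_of_pos ht]
      ring_nf
    rw [this, integral_const_mul]
    have h2' : (∫ t in Set.Ioi (0:ℝ), Real.exp (-(2 * t))) = 1 / 2 := by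
      have := integral_comp_mul_left_Ioi (fun x => Real.exp (-x)) 0 (by norm_num : (0:ℝ) < 2)
      simp only [mul_zero] at this
      rw [this, integral_exp_neg_Ioi]
      norm_num
    rw [h2']
    ring
  rw [hIic, hIoi]
  have hle : (∫ t in Set.Iic (0:ℝ), dist (ℓ t) (ℓ' t) * Real.exp (-2 * |t|))
      ≤ ∫ t, dist (ℓ t) (ℓ' t) * Real.exp (-2 * |t|) := by
    refine setIntegral_le_integral h1 ?_
    filter_upwards with t
    positivity
  linarith
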